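/- arXiv:2002.10146 — 4 statements merged into one kernel-verified Lean document; each statement's English description precedes it below -/
import Mathlib

section
/- Let m, n ≥ 1 and let B be the real (m+n) × (m+n) block matrix B = [[0_{m×m}, J_{m×n}], [J_{n×m}, (J−I)_{n×n}]], where J denotes the all-ones matrix and I the identity matrix. Then the characteristic polynomial of B equals λ^{m−1} (λ+1)^{n−1} (λ² − (n−1)λ − mn); equivalently, the eigenvalues of B are 0 with multiplicity m−1, −1 with multiplicity n−1, and the two simple eigenvalues ((n−1) ± √((n−1)² + 4mn))/2. -/
open Polynomial

private lemma eval_charpoly' {N : Type*} [DecidableEq N] [Fintype N]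
    (M : Matrix N N ℝ) (x : ℝ) :
    (M.charpoly).eval x = (x • (1 : Matrix N N ℝ) - M).det := by
  rw [Matrix.charpoly, ← Polynomial.coe_evalRingHom, RingHom.map_det]
  congr 1
  ext i j
  by_cases h : i = j <;>
    simp [h, Matrix.charmatrix_apply, Matrix.diagonal_apply, Matrix.one_apply, Matrix.map_apply]

private lemma det_key (m n : ℕ) (hm : 1 ≤ m) (hn : 1 ≤ n) (x : ℝ)
    (hx : x ≠ 0) (hx1 : x + 1 ≠ 0) :
    (x • (1 : Matrix (Fin m ⊕ Fin n) (Fin m ⊕ Fin n) ℝ) -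
      Matrix.fromBlocks (0 : Matrix (Fin m) (Fin m) ℝ)
        (Matrix.of fun _ _ => (1 : ℝ)) (Matrix.of fun _ _ => (1 : ℝ))
        ((Matrix.of fun _ _ => (1 : ℝ)) - (1 : Matrix (Fin n) (Fin n) ℝ))).det
      = x ^ (m - 1) * (x + 1) ^ (n - 1) *
        (x ^ 2 - ((n : ℝ) - 1) * x - (m : ℝ) * (n : ℝ)) := by
  set u : Fin m ⊕ Fin n → ℝ := Sum.elim (fun _ => 1) (fun _ => 0) with hu
  set v : Fin m ⊕ Fin n → ℝ := Sum.elim (fun _ => 0) (fun _ => 1) with hv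
  set U : Matrix (Fin m ⊕ Fin n) (Fin 2) ℝ :=
    Matrix.of fun i k => if k = (0 : Fin 2) then u i else v i with hU
  set V : Matrix (Fin 2) (Fin m ⊕ Fin n) ℝ :=
    Matrix.of fun k j => if k = (0 : Fin 2) then v j else u j + v j with hV
  set A : Matrix (Fin m ⊕ Fin n) (Fin m ⊕ Fin n) ℝ :=
    Matrix.fromBlocks (x • 1) 0 0 ((x + 1) • 1) with hA
  have hsplit : x • (1 : Matrix (Fin m ⊕ Fin n) (Fin m ⊕ Fin n) ℝ) -
      Matrix.fromBlocks (0 : Matrix (Fin m) (Fin m) ℝ)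
        (Matrix.of fun _ _ => (1 : ℝ)) (Matrix.of fun _ _ => (1 : ℝ))
        ((Matrix.of fun _ _ => (1 : ℝ)) - (1 : Matrix (Fin n) (Fin n) ℝ))
      = A + U * (-V) := by
    ext i j
    simp only [Matrix.add_apply, Matrix.mul_apply, Matrix.sub_apply, Matrix.smul_apply,
      Matrix.neg_apply, hU, hV, Matrix.of_apply, Fin.sum_univ_two]
    rcases i with i | i <;> rcases j with j | j <;>
      simp [hA, hu, hv, Matrix.one_apply, Matrix.fromBlocks, Matrix.diagonal_apply] <;> ring_nf <;>
      by_cases h : i = j <;> simp [h] <;> ring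
  have hdetA : A.det = x ^ m * (x + 1) ^ n := by
    simp [hA, Matrix.det_fromBlocks_zero₂₁, Matrix.det_smul]
  have hAunit : IsUnit A.det := by
    rw [hdetA]
    exact (isUnit_iff_ne_zero.2 (pow_ne_zero _ hx)).mul
      (isUnit_iff_ne_zero.2 (pow_ne_zero _ hx1))
  rw [hsplit]
  have hAinv : A⁻¹ = Matrix.fromBlocks (x⁻¹ • 1) 0 0 ((x + 1)⁻¹ • 1) := by
    apply Matrix.inv_eq_right_inv
    rw [hA, Matrix.fromBlocks_multiply]
    simp [Matrix.smul_mul, Matrix.mul_smul, smul_smul,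
      inv_mul_cancel₀ hx, inv_mul_cancel₀ hx1, Matrix.fromBlocks_one]
  rw [Matrix.det_add_mul U (-V) hAunit, hdetA, hAinv]
  have h2 : (1 + (-V) * (Matrix.fromBlocks (x⁻¹ • 1) 0 0 ((x + 1)⁻¹ • 1) :
      Matrix (Fin m ⊕ Fin n) (Fin m ⊕ Fin n) ℝ) * U) =
      !![1, -(n : ℝ)/(x+1); -(m : ℝ)/x, 1 - (n : ℝ)/(x+1)] := by
    have hMU : Matrix.fromBlocks (x⁻¹ • (1 : Matrix (Fin m) (Fin m) ℝ)) 0 0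
        ((x + 1)⁻¹ • (1 : Matrix (Fin n) (Fin n) ℝ)) * U =
        Matrix.of fun i k =>
          if k = (0 : Fin 2) then Sum.elim (fun _ => x⁻¹) (fun _ => 0) i
          else Sum.elim (fun _ => 0) (fun _ => (x+1)⁻¹) i := by
      ext i k
      rcases i with i | i <;>
        simp [hU, hu, hv, Matrix.mul_apply, Fintype.sum_sum_type, Matrix.fromBlocks,
          Matrix.one_apply, Finset.sum_ite_eq, apply_ite] <;>
        by_cases h : k = 0 <;> simp [h]
    rw [Matrix.mul_assoc, hMU]
    ext i k
    fin_cases i <;> fin_cases k <;>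
      simp [hV, hu, hv, Matrix.mul_apply, Fintype.sum_sum_type, Matrix.one_apply,
        Finset.sum_ite_eq, apply_ite, Matrix.neg_apply, div_eq_mul_inv] <;> ring
  rw [h2, Matrix.det_fin_two_of]
  obtain ⟨m', rfl⟩ : ∃ m', m = m' + 1 := ⟨m - 1, (Nat.sub_add_cancel hm).symm⟩
  obtain ⟨n', rfl⟩ : ∃ n', n = n' + 1 := ⟨n - 1, (Nat.sub_add_cancel hn).symm⟩
  simp only [Nat.add_sub_cancel, pow_succ]
  push_cast
  field_simp
  ring

/-- For `m, n ≥ 1`, the block matrix `B = [[0, J],[J, J - I]]` (with blocks of sizes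
`m×m`, `m×n`, `n×m`, `n×n`, where `J` is the all-ones matrix) has characteristic
polynomial `λ^(m-1) (λ+1)^(n-1) (λ² - (n-1)λ - mn)`; equivalently, its eigenvalues are
`0` with multiplicity `m-1`, `-1` with multiplicity `n-1`, and the two simple eigenvalues
`((n-1) ± √((n-1)² + 4mn))/2`. -/
theorem charpoly_block_J_matrix (m n : ℕ) (hm : 1 ≤ m) (hn : 1 ≤ n) :
    (Matrix.fromBlocks
        (0 : Matrix (Fin m) (Fin m) ℝ)
        (Matrix.of fun _ _ => (1 : ℝ))
        (Matrix.of fun _ _ => (1 : ℝ))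
        ((Matrix.of fun _ _ => (1 : ℝ)) - (1 : Matrix (Fin n) (Fin n) ℝ))).charpoly
      = X ^ (m - 1) * (X + 1) ^ (n - 1) *
        (X ^ 2 - C ((n : ℝ) - 1) * X - C ((m : ℝ) * (n : ℝ))) ∧
    (Matrix.fromBlocks
        (0 : Matrix (Fin m) (Fin m) ℝ)
        (Matrix.of fun _ _ => (1 : ℝ))
        (Matrix.of fun _ _ => (1 : ℝ))
        ((Matrix.of fun _ _ => (1 : ℝ)) - (1 : Matrix (Fin n) (Fin n) ℝ))).charpoly.roots
      = Multiset.replicate (m - 1) (0 : ℝ) + Multiset.replicate (n - 1) (-1 : ℝ) +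
        {(((n : ℝ) - 1) + Real.sqrt (((n : ℝ) - 1) ^ 2 + 4 * (m : ℝ) * (n : ℝ))) / 2,
         (((n : ℝ) - 1) - Real.sqrt (((n : ℝ) - 1) ^ 2 + 4 * (m : ℝ) * (n : ℝ))) / 2} := by
  set B := Matrix.fromBlocks
        (0 : Matrix (Fin m) (Fin m) ℝ)
        (Matrix.of fun _ _ => (1 : ℝ))
        (Matrix.of fun _ _ => (1 : ℝ))
        ((Matrix.of fun _ _ => (1 : ℝ)) - (1 : Matrix (Fin n) (Fin n) ℝ)) with hB
  have hcp : B.charpoly = X ^ (m - 1) * (X + 1) ^ (n - 1) *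
      (X ^ 2 - C ((n : ℝ) - 1) * X - C ((m : ℝ) * (n : ℝ))) := by
    apply Polynomial.eq_of_infinite_eval_eq
    apply Set.Infinite.mono (s := ({0, -1}ᶜ : Set ℝ))
    · intro x hx
      simp only [Set.mem_compl_iff, Set.mem_insert_iff, Set.mem_singleton_iff, not_or] at hx
      obtain ⟨hx0, hx1⟩ := hx
      have hx1' : x + 1 ≠ 0 := by
        intro h; apply hx1; linarith
      simp only [Set.mem_setOf_eq]
      rw [eval_charpoly' B x, hB, det_key m n hm hn x hx0 hx1']
      simp [eval_mul, eval_pow]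
    · exact Set.Finite.infinite_compl ((Set.finite_singleton _).insert _)
  refine ⟨hcp, ?_⟩
  rw [hcp]
  set s := Real.sqrt (((n : ℝ) - 1) ^ 2 + 4 * (m : ℝ) * (n : ℝ)) with hs
  have hs2 : s ^ 2 = ((n : ℝ) - 1) ^ 2 + 4 * (m : ℝ) * (n : ℝ) := by
    rw [hs]
    apply Real.sq_sqrt
    positivity
  set r₁ : ℝ := (((n : ℝ) - 1) + s) / 2 with hr₁
  set r₂ : ℝ := (((n : ℝ) - 1) - s) / 2 with hr₂
  have hq : (X ^ 2 - C ((n : ℝ) - 1) * X - C ((m : ℝ) * (n : ℝ)) : ℝ[X])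
      = (X - C r₁) * (X - C r₂) := by
    have e1 : r₁ + r₂ = (n : ℝ) - 1 := by rw [hr₁, hr₂]; ring
    have e2 : r₁ * r₂ = -((m : ℝ) * (n : ℝ)) := by
      have : r₁ * r₂ = (((n : ℝ) - 1) ^ 2 - s ^ 2) / 4 := by rw [hr₁, hr₂]; ring
      rw [this, hs2]; ring
    have : ((X - C r₁) * (X - C r₂) : ℝ[X])
        = X ^ 2 - C (r₁ + r₂) * X + C (r₁ * r₂) := by
      simp only [map_add, map_mul]; ring
    rw [this, e1, e2, map_neg]
    ring
  rw [hq]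
  have hX : (X ^ (m - 1) : ℝ[X]) ≠ 0 := pow_ne_zero _ X_ne_zero
  have hX1 : ((X + 1 : ℝ[X])) ^ (n - 1) ≠ 0 :=
    pow_ne_zero _ (Polynomial.Monic.ne_zero (by simpa using monic_X_add_C (1 : ℝ)))
  have hq1 : ((X - C r₁) * (X - C r₂) : ℝ[X]) ≠ 0 :=
    mul_ne_zero (X_sub_C_ne_zero r₁) (X_sub_C_ne_zero r₂)
  rw [Polynomial.roots_mul (mul_ne_zero (mul_ne_zero hX hX1) hq1),
    Polynomial.roots_mul (mul_ne_zero hX hX1),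
    Polynomial.roots_mul hq1, Polynomial.roots_pow, Polynomial.roots_pow, Polynomial.roots_X,
    Polynomial.roots_X_sub_C, Polynomial.roots_X_sub_C]
  have : ((X + 1 : ℝ[X])) = X - C (-1) := by simp
  rw [this, Polynomial.roots_X_sub_C]
  simp [Multiset.nsmul_singleton]
end

section
/- Let m ≥ 2 and let Q_{4m} = ⟨a, b : b^{2m} = 1, a² = b^m, aba^{-1} = b^{-1}⟩ be the dicyclic (generalized quaternion) group of order 4m. Then the spectrum of the non-commuting graph of Q_{4m} is the multiset consisting of 0 with multiplicity 3m−3, −2 with multiplicity m−1, and the two simple eigenvalues (m−1) ± √((m−1)(5m−1)), and the energy of the non-commuting graph of Q_{4m} equals 2((m−1) + √((m−1)(5m−1))). -/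
noncomputable section

/-- The non-commuting graph of a group `G`: vertices are the non-central elements,
two vertices being adjacent iff they do not commute. -/
def ncGraph (G : Type*) [Group G] : SimpleGraph {g : G // g ∉ Subgroup.center G} where
  Adj x y := x.1 * y.1 ≠ y.1 * x.1
  symm := ⟨fun _ _ h e => h e.symm⟩
  loopless := ⟨fun _ h => h rfl⟩

noncomputable instance (G : Type*) [Group G] : DecidableRel (ncGraph G).Adj :=
  fun _ _ => Classical.propDecidable _

noncomputable instance (G : Type*) [Group G] [Fintype G] :
    Fintype {g : G // g ∉ Subgroup.center G} :=
  Fintype.ofFinite _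

noncomputable instance (G : Type*) [Group G] : DecidableEq {g : G // g ∉ Subgroup.center G} :=
  Classical.decEq _

/-- The (adjacency) spectrum of the non-commuting graph of `G` : the multiset of real
eigenvalues (with multiplicity) of its adjacency matrix, i.e. the multiset of roots of
its characteristic polynomial over `ℝ`. -/
def adjSpectrum (G : Type*) [Group G] [Fintype G] : Multiset ℝ :=
  ((ncGraph G).adjMatrix ℝ).charpoly.roots

/-- The energy of the non-commuting graph of `G`: the sum of the absolute values of the
eigenvalues (with multiplicity) of its adjacency matrix. -/
def energy (G : Type*) [Group G] [Fintype G] : ℝ :=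
  ((adjSpectrum G).map (fun x => |x|)).sum

/-- The Laplacian spectrum of the non-commuting graph of `G`. -/
def lapSpectrum (G : Type*) [Group G] [Fintype G] : Multiset ℝ :=
  ((ncGraph G).lapMatrix ℝ).charpoly.roots

/-- The Laplacian energy of the non-commuting graph of `G`. -/
def lapEnergy (G : Type*) [Group G] [Fintype G] : ℝ :=
  ((lapSpectrum G).map (fun μ =>
    |μ - 2 * ((ncGraph G).edgeFinset.card : ℝ) /
      (Fintype.card {g : G // g ∉ Subgroup.center G} : ℝ)|)).sum



open Polynomial Matrix

namespace NCQ

theorem two_m_nz (m : ℕ) (hm : 1 ≤ m) : NeZero (2*m) := ⟨by omega⟩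

theorem cast_m_ne_zero (m : ℕ) (hm : 1 ≤ m) : ((m : ZMod (2*m)) : ZMod (2*m)) ≠ 0 := by
  intro h
  rw [ZMod.natCast_eq_zero_iff] at h
  have := Nat.le_of_dvd (by omega) h
  omega

theorem add_self_eq_zero_iff (m : ℕ) (hm : 1 ≤ m) (i : ZMod (2*m)) :
    i + i = 0 ↔ i = 0 ∨ i = (m : ZMod (2*m)) := by
  haveI : NeZero (2*m) := ⟨by omega⟩
  constructor
  · intro h
    have hi : ((i.val : ℕ) : ZMod (2*m)) = i := ZMod.natCast_rightInverse i
    have h2 : ((i.val + i.val : ℕ) : ZMod (2*m)) = 0 := by push_cast; rw [hi]; exact h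
    rw [ZMod.natCast_eq_zero_iff] at h2
    have hv : i.val < 2*m := ZMod.val_lt i
    obtain ⟨c, hc⟩ := h2
    have hc2 : c < 2 := by nlinarith
    interval_cases c
    · have h0 : i.val = 0 := by omega
      left; rw [← hi, h0]; simp
    · right; rw [← hi]; have : i.val = m := by omega
      rw [this]
  · rintro (rfl | rfl)
    · simp
    · have h2 : ((2*m : ℕ) : ZMod (2*m)) = 0 := ZMod.natCast_self _
      push_cast at h2
      linear_combination h2

theorem sub_cond_iff (m : ℕ) (hm : 1 ≤ m) (i j : ZMod (2*m)) :
    (m : ZMod (2*m)) + j - i = (m : ZMod (2*m)) + i - j ↔ (i = j ∨ j = i + m) := by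
  have key : ((m : ZMod (2*m)) + j - i = (m : ZMod (2*m)) + i - j) ↔ (j - i) + (j - i) = 0 := by
    constructor <;> intro h <;> linear_combination h
  rw [key, add_self_eq_zero_iff m hm]
  constructor
  · rintro (h | h)
    · left; exact (sub_eq_zero.mp h).symm
    · right; rw [sub_eq_iff_eq_add] at h; rw [h]; ring
  · rintro (rfl | rfl)
    · left; exact sub_self _
    · right; ring

end NCQ

namespace NCQ
open QuaternionGroup

theorem mem_center_iff (m : ℕ) (hm : 2 ≤ m) (g : QuaternionGroup m) :
    g ∈ Subgroup.center (QuaternionGroup m) ↔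
      g = a 0 ∨ g = a (m : ZMod (2*m)) := by
  haveI : NeZero (2*m) := ⟨by omega⟩
  constructor
  · intro h
    rw [Subgroup.mem_center_iff] at h
    cases g with
    | a i =>
      have h1 := h (xa 0)
      simp only [xa_mul_a, a_mul_xa, xa.injEq] at h1
      have h2 : i + i = 0 := by linear_combination h1
      rcases (add_self_eq_zero_iff m (by omega) i).mp h2 with rfl | rfl
      · left; rfl
      · right; rfl
    | xa i =>
      exfalso
      have h1 := h (a 1)
      simp only [a_mul_xa, xa_mul_a, xa.injEq] at h1
      have h2 : (1 : ZMod (2*m)) + 1 = 0 := by linear_combination - h1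
      rcases (add_self_eq_zero_iff m (by omega) 1).mp h2 with h3 | h3
      · haveI : Fact (1 < 2*m) := ⟨by omega⟩
        have := congrArg ZMod.val h3
        rw [ZMod.val_one, ZMod.val_zero] at this
        exact one_ne_zero this
      · haveI : Fact (1 < 2*m) := ⟨by omega⟩
        have := congrArg ZMod.val h3
        rw [ZMod.val_one, ZMod.val_cast_of_lt (by omega)] at this
        omega
  · have hmm : (m : ZMod (2*m)) + m = 0 := by
      have h2 : ((2*m : ℕ) : ZMod (2*m)) = 0 := ZMod.natCast_self _
      push_cast at h2
      linear_combination h2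
    rintro (rfl | rfl) <;> rw [Subgroup.mem_center_iff] <;> rintro (j | j)
    · simp [add_comm]
    · simp
    · simp [add_comm]
    · simp only [a_mul_xa, xa_mul_a, xa.injEq]
      linear_combination hmm

theorem xa_not_center (m : ℕ) (hm : 2 ≤ m) (i : ZMod (2*m)) :
    xa i ∉ Subgroup.center (QuaternionGroup m) := by
  rw [mem_center_iff m hm]
  rintro (h | h) <;> cases h

theorem a_not_center_iff (m : ℕ) (hm : 2 ≤ m) (i : ZMod (2*m)) :
    a i ∉ Subgroup.center (QuaternionGroup m) ↔ ¬(i = 0 ∨ i = (m : ZMod (2*m))) := by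
  rw [mem_center_iff m hm]
  simp only [a.injEq]

end NCQ


section Graph
open QuaternionGroup NCQ

theorem ncGraph_adj {G : Type*} [Group G] (x y : {g : G // g ∉ Subgroup.center G}) :
    (ncGraph G).Adj x y ↔ x.1 * y.1 ≠ y.1 * x.1 := Iff.rfl

end Graph

namespace NCQ
open QuaternionGroup

abbrev S (m : ℕ) := {i : ZMod (2*m) // ¬(i = 0 ∨ i = (m : ZMod (2*m)))}

def vEquiv (m : ℕ) (hm : 2 ≤ m) :
    {g : QuaternionGroup m // g ∉ Subgroup.center (QuaternionGroup m)} ≃ (S m ⊕ ZMod (2*m)) where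
  toFun v :=
    match v with
    | ⟨a i, h⟩ => Sum.inl ⟨i, (a_not_center_iff m hm i).mp h⟩
    | ⟨xa i, _⟩ => Sum.inr i
  invFun u :=
    match u with
    | Sum.inl ⟨i, hi⟩ => ⟨a i, (a_not_center_iff m hm i).mpr hi⟩
    | Sum.inr i => ⟨xa i, xa_not_center m hm i⟩
  left_inv := by rintro ⟨(i | i), h⟩ <;> rfl
  right_inv := by rintro (⟨i, hi⟩ | i) <;> rfl

theorem vEquiv_symm_inl (m : ℕ) (hm : 2 ≤ m) (i : ZMod (2*m)) (hi) :
    (vEquiv m hm).symm (Sum.inl ⟨i, hi⟩) = ⟨a i, (a_not_center_iff m hm i).mpr hi⟩ := rfl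

theorem vEquiv_symm_inr (m : ℕ) (hm : 2 ≤ m) (i : ZMod (2*m)) :
    (vEquiv m hm).symm (Sum.inr i) = ⟨xa i, xa_not_center m hm i⟩ := rfl

def bigM (m : ℕ) : Matrix (S m ⊕ ZMod (2*m)) (S m ⊕ ZMod (2*m)) ℝ :=
  Matrix.fromBlocks 0 (Matrix.of fun _ _ => 1) (Matrix.of fun _ _ => 1)
    (Matrix.of fun i j => if i = j ∨ j = i + (m : ZMod (2*m)) then 0 else 1)

theorem reindex_adjMatrix (m : ℕ) (hm : 2 ≤ m) :
    (Matrix.reindex (vEquiv m hm) (vEquiv m hm)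
      ((ncGraph (QuaternionGroup m)).adjMatrix ℝ)) = bigM m := by
  ext u v
  rcases u with (⟨i, hi⟩ | i) <;> rcases v with (⟨j, hj⟩ | j) <;>
    simp only [Matrix.reindex_apply, Matrix.submatrix_apply, vEquiv_symm_inl, vEquiv_symm_inr,
      SimpleGraph.adjMatrix_apply, bigM, Matrix.fromBlocks_apply₁₁, Matrix.fromBlocks_apply₁₂,
      Matrix.fromBlocks_apply₂₁, Matrix.fromBlocks_apply₂₂, Matrix.zero_apply, Matrix.of_apply,
      ncGraph_adj]
  · rw [if_neg]
    intro h
    exact h (by simp [add_comm])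
  · rw [if_pos]
    intro h
    simp only [a_mul_xa, xa_mul_a, xa.injEq] at h
    have h2 : i + i = 0 := by linear_combination - h
    exact hi ((add_self_eq_zero_iff m (by omega) i).mp h2)
  · rw [if_pos]
    intro h
    simp only [a_mul_xa, xa_mul_a, xa.injEq] at h
    have h2 : j + j = 0 := by linear_combination h
    exact hj ((add_self_eq_zero_iff m (by omega) j).mp h2)
  · by_cases hc : i = j ∨ j = i + (m : ZMod (2*m))
    · rw [if_neg, if_pos hc]
      simp only [xa_mul_xa, ne_eq, xa.injEq, a.injEq, not_not]
      exact (sub_cond_iff m (by omega) i j).mpr hc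
    · rw [if_pos, if_neg hc]
      simp only [xa_mul_xa, ne_eq, xa.injEq, a.injEq]
      intro h
      exact hc ((sub_cond_iff m (by omega) i j).mp h)

end NCQ



namespace NCQ

section DetLemmas
variable {n : Type*} [DecidableEq n] [Fintype n] {R : Type*} [CommRing R]

theorem det_fromBlocks_symm (A B : Matrix n n R) :
    (Matrix.fromBlocks A B B A).det = (A + B).det * (A - B).det := by
  have h : Matrix.fromBlocks (1 : Matrix n n R) 1 0 1 * Matrix.fromBlocks A B B A *
      Matrix.fromBlocks (1 : Matrix n n R) (-1) 0 1 =
      Matrix.fromBlocks (A + B) 0 B (A - B) := by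
    rw [Matrix.fromBlocks_multiply, Matrix.fromBlocks_multiply, Matrix.fromBlocks_inj]
    refine ⟨by simp, by simp [Matrix.mul_neg]; abel, by simp, by simp [Matrix.mul_neg]; abel⟩
  have hdet := congrArg Matrix.det h
  rw [Matrix.det_mul, Matrix.det_mul, Matrix.det_fromBlocks_zero₂₁,
    Matrix.det_fromBlocks_zero₂₁, Matrix.det_fromBlocks_zero₁₂, Matrix.det_one, one_mul,
    mul_one, one_mul] at hdet
  exact hdet

theorem det_smul_one_add_const {K : Type*} [Field K] (α β : K) (hα : α ≠ 0) :
    (α • (1 : Matrix n n K) + Matrix.of (fun _ _ => β)).det =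
      α ^ (Fintype.card n) * (1 + (Fintype.card n : K) * β / α) := by
  have h : α • (1 : Matrix n n K) + Matrix.of (fun _ _ => β) =
      α • (1 + Matrix.replicateCol Unit (fun _ : n => β / α) * Matrix.replicateRow Unit (fun _ : n => (1:K))) := by
    ext i j
    by_cases hij : i = j
    · subst hij; simp [Matrix.mul_apply, Matrix.one_apply, mul_add, mul_div_cancel₀ _ hα]
    · simp [Matrix.mul_apply, Matrix.one_apply, hij, mul_div_cancel₀ _ hα]
  rw [h, Matrix.det_smul, Matrix.det_one_add_replicateCol_mul_replicateRow]
  simp [dotProduct, mul_add, mul_div_assoc]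

end DetLemmas

section GZ
variable (m : ℕ)

theorem castinj (hm : 1 ≤ m) {x y : ℕ} (hx : x < 2*m) (hy : y < 2*m) :
    ((x : ZMod (2*m)) = (y : ZMod (2*m))) ↔ x = y := by
  constructor
  · intro h
    have := congrArg ZMod.val h
    rwa [ZMod.val_cast_of_lt hx, ZMod.val_cast_of_lt hy] at this
  · rintro rfl; rfl

def gZ (hm : 1 ≤ m) : (Fin m ⊕ Fin m) ≃ ZMod (2*m) where
  toFun u := Sum.elim (fun a : Fin m => ((a : ℕ) : ZMod (2*m)))
    (fun a : Fin m => (((a : ℕ) + m : ℕ) : ZMod (2*m))) u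
  invFun i :=
    if h : (i.val < m) then Sum.inl ⟨i.val, h⟩
    else Sum.inr ⟨i.val - m, by
      haveI : NeZero (2*m) := ⟨by omega⟩
      have := ZMod.val_lt i; omega⟩
  left_inv := by
    haveI : NeZero (2*m) := ⟨by omega⟩
    rintro (a | a)
    · have h1 : ((a : ℕ) : ZMod (2*m)).val = (a : ℕ) := ZMod.val_cast_of_lt (by omega)
      simp only [Sum.elim_inl, h1, a.isLt, dif_pos]
    · have h1 : (((a : ℕ) + m : ℕ) : ZMod (2*m)).val = (a : ℕ) + m :=
        ZMod.val_cast_of_lt (by have := a.isLt; omega)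
      simp only [Sum.elim_inr, h1]
      rw [dif_neg (by omega)]
      congr 1
      exact Fin.ext (by simp)
  right_inv := by
    haveI : NeZero (2*m) := ⟨by omega⟩
    intro i
    by_cases h : i.val < m
    · simp only [dif_pos h, Sum.elim_inl]
      exact ZMod.natCast_rightInverse i
    · simp only [dif_neg h, Sum.elim_inr]
      have hv := ZMod.val_lt i
      have h2 : i.val - m + m = i.val := by omega
      show (((i.val - m) + m : ℕ) : ZMod (2*m)) = i
      rw [h2]
      exact ZMod.natCast_rightInverse i

theorem gZ_inl (hm : 1 ≤ m) (a : Fin m) : gZ m hm (Sum.inl a) = ((a : ℕ) : ZMod (2*m)) := rfl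

theorem gZ_inr (hm : 1 ≤ m) (a : Fin m) :
    gZ m hm (Sum.inr a) = (((a : ℕ) + m : ℕ) : ZMod (2*m)) := rfl

theorem gZ_rel (hm : 1 ≤ m) (u v : Fin m ⊕ Fin m) :
    (gZ m hm u = gZ m hm v ∨ gZ m hm v = gZ m hm u + (m : ZMod (2*m))) ↔
      Sum.elim id id u = Sum.elim id id v := by
  haveI : NeZero (2*m) := ⟨by omega⟩
  have hadd : ∀ x : ℕ, ((x : ZMod (2*m)) + (m : ZMod (2*m))) = ((x + m : ℕ) : ZMod (2*m)) := by
    intro x; push_cast; ring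
  have h2m : ∀ x : ℕ, ((x + m + m : ℕ) : ZMod (2*m)) = (x : ZMod (2*m)) := by
    intro x
    have h0 : ((2*m : ℕ) : ZMod (2*m)) = 0 := ZMod.natCast_self _
    push_cast at h0 ⊢
    linear_combination h0
  rcases u with a | a <;> rcases v with b | b <;>
    simp only [gZ_inl, gZ_inr, Sum.elim_inl, Sum.elim_inr, id_eq, hadd]
  · rw [castinj m hm (by omega) (by omega),
      castinj m hm (by have := b.isLt; omega) (by have := a.isLt; omega)]
    constructor
    · rintro (h | h)
      · exact Fin.ext h
      · exfalso; have := b.isLt; have := a.isLt; omega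
    · rintro rfl; left; rfl
  · rw [castinj m hm (by omega) (by have := b.isLt; omega),
      castinj m hm (by have := b.isLt; omega) (by have := a.isLt; omega)]
    constructor
    · rintro (h | h)
      · exfalso; have := a.isLt; have := b.isLt; omega
      · exact Fin.ext (by omega)
    · rintro rfl; right; rfl
  · rw [castinj m hm (by have := a.isLt; omega) (by omega), h2m,
      castinj m hm (by omega) (by omega)]
    constructor
    · rintro (h | h)
      · exfalso; have := b.isLt; have := a.isLt; omega
      · exact Fin.ext (by omega)
    · rintro rfl; right; rfl
  · rw [castinj m hm (by have := a.isLt; omega) (by have := b.isLt; omega), h2m,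
      castinj m hm (by have := b.isLt; omega) (by have := a.isLt; omega)]
    constructor
    · rintro (h | h)
      · exact Fin.ext (by omega)
      · exfalso; have := b.isLt; have := a.isLt; omega
    · rintro rfl; left; rfl

end GZ

end NCQ


namespace NCQ
open Polynomial

abbrev KK : Type := RatFunc ℝ

noncomputable def phiR : ℝ[X] →+* KK := (algebraMap ℝ[X] (RatFunc ℝ) : ℝ[X] →+* RatFunc ℝ)

theorem phiR_inj : Function.Injective phiR := IsFractionRing.injective ℝ[X] (RatFunc ℝ)

theorem card_S (m : ℕ) [NeZero (2*m)] (hm : 2 ≤ m) : Fintype.card (S m) = 2*m - 2 := by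
  have h1 : Fintype.card (S m) =
      Fintype.card (ZMod (2*m)) - Fintype.card {i : ZMod (2*m) // i = 0 ∨ i = (m : ZMod (2*m))} :=
    Fintype.card_subtype_compl _
  have h2 : Fintype.card {i : ZMod (2*m) // i = 0 ∨ i = (m : ZMod (2*m))} = 2 := by
    rw [Fintype.card_subtype]
    have h3 : (Finset.univ.filter (fun i : ZMod (2*m) => i = 0 ∨ i = (m : ZMod (2*m)))) =
        {0, (m : ZMod (2*m))} := by
      ext y
      simp
    rw [h3, Finset.card_insert_of_notMem (by
      simp only [Finset.mem_singleton]
      exact fun h => cast_m_ne_zero m (by omega) h.symm), Finset.card_singleton]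
  rw [h1, h2, ZMod.card]

set_option maxHeartbeats 2000000 in
set_option synthInstance.maxHeartbeats 2000000 in
theorem charpoly_bigM (k : ℕ) :
    (bigM (k+2)).charpoly =
      X^(3*k+3) * (X + 2)^(k+1) *
        (X^2 - (2*((k:ℕ):ℝ[X])+2) * X - (4*((k:ℕ):ℝ[X])^2+12*((k:ℕ):ℝ[X])+8)) := by
  have hm2 : 2 ≤ k + 2 := by omega
  have hm1 : 1 ≤ k + 2 := by omega
  haveI : NeZero (2*(k+2)) := ⟨by omega⟩
  apply phiR_inj
  set x : KK := phiR X with hxdef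
  have hx : x ≠ 0 := by
    rw [hxdef]
    intro h
    rw [map_eq_zero_iff phiR phiR_inj] at h
    exact Polynomial.X_ne_zero h
  have hx2 : x + 2 ≠ 0 := by
    have h1 : x + 2 = phiR (X + 2) := by rw [map_add, map_ofNat]
    rw [h1]
    intro h
    rw [map_eq_zero_iff phiR phiR_inj] at h
    have := congrArg (Polynomial.eval 0) h
    simp at this
  set cc : KK := (2*((k:ℕ):KK)+2)/x with hccdef
  -- step 1 : map of charmatrix
  have step1 : (Matrix.charmatrix (bigM (k+2))).map phiR =
      Matrix.fromBlocks (x • (1 : Matrix (S (k+2)) (S (k+2)) KK))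
        (Matrix.of fun _ _ => (-1 : KK)) (Matrix.of fun _ _ => (-1 : KK))
        (Matrix.of fun i j : ZMod (2*(k+2)) =>
          (if i = j then x else 0) - (if i = j ∨ j = i + ((k : ZMod (2*(k+2))) + 2) then 0 else 1)) := by
    ext u v
    rcases u with u | u <;> rcases v with v | v
    · by_cases h : u = v
      · subst h
        simp [Matrix.map_apply, Matrix.charmatrix_apply, Matrix.diagonal_apply, bigM,
          Matrix.one_apply]
        exact hxdef.symm
      · simp [Matrix.map_apply, Matrix.charmatrix_apply, Matrix.diagonal_apply, bigM,
          Matrix.one_apply, h]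
    · simp [Matrix.map_apply, Matrix.charmatrix_apply, Matrix.diagonal_apply, bigM]
    · simp [Matrix.map_apply, Matrix.charmatrix_apply, Matrix.diagonal_apply, bigM]
    · by_cases h : u = v
      · subst h
        simp [Matrix.map_apply, Matrix.charmatrix_apply, Matrix.diagonal_apply, bigM]
        exact hxdef.symm
      · by_cases hc2 : u = v ∨ v = u + ((k : ZMod (2*(k+2))) + 2)
        · simp [Matrix.map_apply, Matrix.charmatrix_apply, Matrix.diagonal_apply, bigM, h, hc2]
        · simp [Matrix.map_apply, Matrix.charmatrix_apply, Matrix.diagonal_apply, bigM, h, hc2]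
  -- step 2 : Schur complement
  haveI hInv : Invertible (x • (1 : Matrix (S (k+2)) (S (k+2)) KK)) :=
    invertibleOfLeftInverse _ (x⁻¹ • 1) (by
      rw [Matrix.smul_mul, Matrix.one_mul, smul_smul, inv_mul_cancel₀ hx, one_smul])
  have hinv : ⅟(x • (1 : Matrix (S (k+2)) (S (k+2)) KK)) = x⁻¹ • 1 :=
    invOf_eq_left_inv (by
      rw [Matrix.smul_mul, Matrix.one_mul, smul_smul, inv_mul_cancel₀ hx, one_smul])
  have hcharpoly : phiR ((bigM (k+2)).charpoly) =
      ((Matrix.charmatrix (bigM (k+2))).map phiR).det := by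
    rw [Matrix.charpoly, RingHom.map_det, RingHom.mapMatrix_apply]
  rw [hcharpoly, step1, Matrix.det_fromBlocks₁₁, hinv]
  have hcard : Fintype.card (S (k+2)) = 2*k+2 := by rw [card_S (k+2) hm2]; omega
  have hdetA : (x • (1 : Matrix (S (k+2)) (S (k+2)) KK)).det = x^(2*k+2) := by
    rw [Matrix.det_smul, Matrix.det_one, mul_one, hcard]
  have h1 : ((Matrix.of fun (_ : ZMod (2*(k+2))) (_ : S (k+2)) => (-1:KK)) *
      (x⁻¹ • (1 : Matrix (S (k+2)) (S (k+2)) KK))) =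
      Matrix.of fun (_ : ZMod (2*(k+2))) (_ : S (k+2)) => -x⁻¹ := by
    rw [Matrix.mul_smul, Matrix.mul_one]
    ext i j
    simp [smul_eq_mul]
  have h2 : (Matrix.of fun (_ : ZMod (2*(k+2))) (_ : S (k+2)) => (-x⁻¹ : KK)) *
      (Matrix.of fun (_ : S (k+2)) (_ : ZMod (2*(k+2))) => (-1:KK)) =
      Matrix.of fun (_ : ZMod (2*(k+2))) (_ : ZMod (2*(k+2))) => (2*((k:ℕ):KK)+2) * x⁻¹ := by
    ext i j
    simp only [Matrix.mul_apply, Matrix.of_apply, neg_mul, neg_neg, Finset.sum_const,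
      Finset.card_univ, hcard, nsmul_eq_mul]
    push_cast
    ring
  rw [h1, h2]
  -- step 3 : rewrite remaining block
  have hD : (Matrix.of fun i j : ZMod (2*(k+2)) =>
        (if i = j then x else 0) - (if i = j ∨ j = i + ((k : ZMod (2*(k+2))) + 2) then 0 else 1)) -
      Matrix.of (fun _ _ : ZMod (2*(k+2)) => (2*((k:ℕ):KK)+2) * x⁻¹) =
      Matrix.of (fun i j : ZMod (2*(k+2)) =>
        (if i = j then x else 0) - (if i = j ∨ j = i + ((k : ZMod (2*(k+2))) + 2) then 0 else 1)
          - cc) := by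
    ext i j
    simp only [Matrix.sub_apply, Matrix.of_apply, hccdef, div_eq_mul_inv]
  rw [hD]
  -- step 4 : reindex the bottom block
  set K2 : Matrix (Fin (k+2)) (Fin (k+2)) KK :=
    Matrix.of (fun a b : Fin (k+2) => if a = b then cc else 1 + cc) with hK2def
  have hc' : ((k : ZMod (2*(k+2))) + 2) = (((k+2 : ℕ)) : ZMod (2*(k+2))) := by push_cast; ring
  have hsub : (Matrix.of (fun i j : ZMod (2*(k+2)) =>
        (if i = j then x else 0) - (if i = j ∨ j = i + ((k : ZMod (2*(k+2))) + 2) then 0 else 1)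
          - cc)).submatrix (gZ (k+2) hm1) (gZ (k+2) hm1) =
      Matrix.fromBlocks (x • 1 - K2) (-K2) (-K2) (x • 1 - K2) := by
    ext u v
    have hiff : (gZ (k+2) hm1 u = gZ (k+2) hm1 v ∨
        gZ (k+2) hm1 v = gZ (k+2) hm1 u + ((k : ZMod (2*(k+2))) + 2)) ↔
        Sum.elim id id u = Sum.elim id id v := by
      rw [hc']
      exact gZ_rel (k+2) hm1 u v
    have hinj : (gZ (k+2) hm1 u = gZ (k+2) hm1 v) ↔ u = v := (gZ (k+2) hm1).injective.eq_iff
    have e1 : (if gZ (k+2) hm1 u = gZ (k+2) hm1 v then x else (0:KK)) =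
        (if u = v then x else 0) := if_congr hinj rfl rfl
    have e2 : (if (gZ (k+2) hm1 u = gZ (k+2) hm1 v ∨
        gZ (k+2) hm1 v = gZ (k+2) hm1 u + ((k : ZMod (2*(k+2))) + 2)) then (0:KK) else 1) =
        (if Sum.elim id id u = Sum.elim id id v then 0 else 1) := if_congr hiff rfl rfl
    rw [Matrix.submatrix_apply, Matrix.of_apply, e1, e2]
    rcases u with a | a <;> rcases v with b | b <;>
      simp only [Matrix.fromBlocks_apply₁₁, Matrix.fromBlocks_apply₁₂,
        Matrix.fromBlocks_apply₂₁, Matrix.fromBlocks_apply₂₂, Sum.elim_inl, Sum.elim_inr,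
        id_eq, Sum.inl.injEq, Sum.inr.injEq, reduceCtorEq, if_false, hK2def,
        Matrix.sub_apply, Matrix.neg_apply, Matrix.smul_apply, Matrix.one_apply,
        Matrix.of_apply, smul_eq_mul] <;>
      split_ifs <;> simp only [*, ite_true, ite_false, not_false_eq_true] <;> ring
  have hdet2 : (Matrix.of (fun i j : ZMod (2*(k+2)) =>
        (if i = j then x else 0) - (if i = j ∨ j = i + ((k : ZMod (2*(k+2))) + 2) then 0 else 1)
          - cc)).det = (Matrix.fromBlocks (x • 1 - K2) (-K2) (-K2) (x • 1 - K2)).det := by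
    rw [← hsub, Matrix.det_submatrix_equiv_self]
  rw [hdet2, det_fromBlocks_symm]
  -- step 5 : the two small determinants
  have hAB1 : ((x • 1 - K2) + (-K2)) = (x+2) • (1 : Matrix (Fin (k+2)) (Fin (k+2)) KK) +
      Matrix.of (fun _ _ => -2 - 2*cc) := by
    ext a b
    simp only [Matrix.add_apply, Matrix.sub_apply, Matrix.neg_apply, Matrix.smul_apply,
      Matrix.one_apply, Matrix.of_apply, hK2def, smul_eq_mul]
    split_ifs <;> ring
  have hAB2 : ((x • 1 - K2) - (-K2)) = x • (1 : Matrix (Fin (k+2)) (Fin (k+2)) KK) := by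
    ext a b
    simp only [Matrix.sub_apply, Matrix.neg_apply, Matrix.smul_apply,
      Matrix.one_apply, Matrix.of_apply, hK2def, smul_eq_mul]
    split_ifs <;> ring
  simp only [hAB1, hAB2, det_smul_one_add_const _ _ hx2, Matrix.det_smul, Matrix.det_one,
    hcard, Fintype.card_fin]
  -- step 6 : final scalar computation
  simp only [_root_.map_mul, map_pow, _root_.map_add, map_sub, map_natCast, map_ofNat, ← hxdef]
  rw [hccdef]
  push_cast
  field_simp
  ring

end NCQ

theorem NCQ.quad_factor (b c lp lm : ℝ) (hsum : lp + lm = b) (hprod : lp * lm = c) :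
    (X:ℝ[X])^2 - C b * X + C c = (X - C lp) * (X - C lm) := by
  subst hsum hprod
  rw [map_add, _root_.map_mul]
  ring

/-- Spectrum and energy of the non-commuting graph of the dicyclic (generalized
quaternion) group `Q_{4m}` of order `4m` (`m ≥ 2`):
`spec = {0^(3m-3), (-2)^(m-1), ((m-1) ± √((m-1)(5m-1)))^1}` and
`E = 2((m-1) + √((m-1)(5m-1)))`. -/
theorem spectrum_energy_ncGraph_dicyclic (m : ℕ) [NeZero m] (hm : 2 ≤ m) :
    adjSpectrum (QuaternionGroup m) =
      Multiset.replicate (3 * m - 3) (0 : ℝ) +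
      Multiset.replicate (m - 1) (-2 : ℝ) +
      {((m : ℝ) - 1) + Real.sqrt (((m : ℝ) - 1) * (5 * (m : ℝ) - 1)),
       ((m : ℝ) - 1) - Real.sqrt (((m : ℝ) - 1) * (5 * (m : ℝ) - 1))} ∧
    energy (QuaternionGroup m) =
      2 * (((m : ℝ) - 1) + Real.sqrt (((m : ℝ) - 1) * (5 * (m : ℝ) - 1))) := by
  obtain ⟨k, rfl⟩ : ∃ k, m = k + 2 := ⟨m - 2, by omega⟩
  have hm' : 2 ≤ k + 2 := by omega
  have hkR : (0:ℝ) ≤ (k:ℝ) := Nat.cast_nonneg k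
  set a : ℝ := ((k+2 : ℕ) : ℝ) with hadef
  have haval : a = (k:ℝ) + 2 := by rw [hadef]; push_cast; ring
  set s : ℝ := Real.sqrt ((a - 1) * (5 * a - 1)) with hsdef
  have hnn : (0:ℝ) ≤ (a - 1) * (5 * a - 1) := by rw [haval]; nlinarith
  have hs2 : s * s = (a - 1) * (5 * a - 1) := Real.mul_self_sqrt hnn
  have hsnn : 0 ≤ s := Real.sqrt_nonneg _
  set lp : ℝ := (a - 1) + s with hlpdef
  set lm : ℝ := (a - 1) - s with hlmdef
  have hsum : lp + lm = 2*(k:ℝ)+2 := by rw [hlpdef, hlmdef, haval]; ring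
  have hprod : lp * lm = -(4*(k:ℝ)^2+12*(k:ℝ)+8) := by
    rw [hlpdef, hlmdef]
    have : ((a-1)+s) * ((a-1)-s) = (a-1)*(a-1) - s*s := by ring
    rw [this, hs2, haval]
    ring
  -- factor the quadratic
  have hq : (X:ℝ[X])^2 - (2*((k:ℕ):ℝ[X])+2) * X - (4*((k:ℕ):ℝ[X])^2+12*((k:ℕ):ℝ[X])+8) =
      (X - C lp) * (X - C lm) := by
    rw [← NCQ.quad_factor _ _ lp lm hsum hprod]
    simp only [map_add, _root_.map_mul, map_pow, map_neg, map_natCast, map_ofNat]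
    ring
  have hXC : (X + 2 : ℝ[X]) = X - C (-2 : ℝ) := by
    rw [map_neg, map_ofNat, sub_neg_eq_add]
  -- compute the spectrum
  have hcp : ((ncGraph (QuaternionGroup (k+2))).adjMatrix ℝ).charpoly =
      (NCQ.bigM (k+2)).charpoly := by
    rw [← NCQ.reindex_adjMatrix (k+2) hm', Matrix.charpoly_reindex]
  have hne1 : ((X:ℝ[X])^(3*k+3) * (X - C (-2:ℝ))^(k+1)) ≠ 0 :=
    ((Polynomial.monic_X.pow _).mul ((Polynomial.monic_X_sub_C _).pow _)).ne_zero
  have hne2 : ((X - C lp) * (X - C lm) : ℝ[X]) ≠ 0 :=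
    ((Polynomial.monic_X_sub_C _).mul (Polynomial.monic_X_sub_C _)).ne_zero
  have hspec : adjSpectrum (QuaternionGroup (k+2)) =
      Multiset.replicate (3 * (k+2) - 3) (0 : ℝ) +
      Multiset.replicate ((k+2) - 1) (-2 : ℝ) + {lp, lm} := by
    rw [adjSpectrum, hcp, NCQ.charpoly_bigM k, hq, hXC]
    rw [Polynomial.roots_mul (mul_ne_zero hne1 hne2),
      Polynomial.roots_mul hne1,
      Polynomial.roots_mul (mul_ne_zero (Polynomial.monic_X_sub_C lp).ne_zero
        (Polynomial.monic_X_sub_C lm).ne_zero),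
      Polynomial.roots_pow, Polynomial.roots_pow, Polynomial.roots_X,
      Polynomial.roots_X_sub_C, Polynomial.roots_X_sub_C, Polynomial.roots_X_sub_C]
    rw [Multiset.nsmul_singleton, Multiset.nsmul_singleton]
    rw [show 3*(k+2)-3 = 3*k+3 from by omega, show (k+2)-1 = k+1 from by omega]
    rfl
  have hgoalspec : adjSpectrum (QuaternionGroup (k+2)) =
      Multiset.replicate (3 * (k+2) - 3) (0 : ℝ) +
      Multiset.replicate ((k+2) - 1) (-2 : ℝ) +
      {(((k+2:ℕ) : ℝ) - 1) + Real.sqrt ((((k+2:ℕ) : ℝ) - 1) * (5 * ((k+2:ℕ):ℝ) - 1)),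
       (((k+2:ℕ) : ℝ) - 1) - Real.sqrt ((((k+2:ℕ) : ℝ) - 1) * (5 * ((k+2:ℕ):ℝ) - 1))} := hspec
  refine ⟨hgoalspec, ?_⟩
  -- energy
  have hlpnn : 0 ≤ lp := by rw [hlpdef, haval]; nlinarith
  have hlmnp : lm ≤ 0 := by
    rw [hlmdef]
    have h1 : a - 1 = Real.sqrt ((a-1) * (a-1)) :=
      (Real.sqrt_mul_self (by rw [haval]; nlinarith)).symm
    have h2 : Real.sqrt ((a-1)*(a-1)) ≤ Real.sqrt ((a-1)*(5*a-1)) :=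
      Real.sqrt_le_sqrt (by rw [haval]; nlinarith)
    rw [hsdef]
    linarith [h1 ▸ h2]
  rw [energy, hgoalspec]
  simp only [Multiset.map_add, Multiset.sum_add, Multiset.map_replicate, Multiset.sum_replicate,
    abs_zero, abs_neg, abs_two, smul_zero, nsmul_eq_mul, Multiset.insert_eq_cons,
    Multiset.map_cons, Multiset.map_singleton, Multiset.sum_cons, Multiset.sum_singleton]
  rw [show ((abs (((k+2:ℕ) : ℝ) - 1 + Real.sqrt ((((k+2:ℕ) : ℝ) - 1) * (5 * ((k+2:ℕ):ℝ) - 1)))) = lp)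
    from abs_of_nonneg hlpnn,
    show ((abs (((k+2:ℕ) : ℝ) - 1 - Real.sqrt ((((k+2:ℕ) : ℝ) - 1) * (5 * ((k+2:ℕ):ℝ) - 1)))) = -lm)
    from abs_of_nonpos hlmnp]
  rw [hlpdef, hlmdef, show (k+2)-1 = k+1 from by omega, haval]
  push_cast
  ring
end
end

section
/- Let n ≥ 1 and let U_{6n} be the group of order 6n with presentation ⟨a, b : a^{2n} = 1, b³ = 1, a^{-1}ba = b^{-1}⟩. Then the spectrum of the non-commuting graph of U_{6n} is the multiset consisting of 0 with multiplicity 5n−4, −n with multiplicity 2, and the two simple eigenvalues n + n√7 and n − n√7, and the energy of the non-commuting graph of U_{6n} equals 2n(1 + √7). -/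
noncomputable section

/-- Relators of the presentation `U_{6n} = ⟨a, b : a^(2n) = 1, b³ = 1, a⁻¹ba = b⁻¹⟩`
(with `a = FreeGroup.of true`, `b = FreeGroup.of false`). -/
def U6nRels (n : ℕ) : Set (FreeGroup Bool) :=
  { FreeGroup.of true ^ (2 * n), FreeGroup.of false ^ 3,
    (FreeGroup.of true)⁻¹ * FreeGroup.of false * FreeGroup.of true * FreeGroup.of false }

namespace U6nAux

def chi (m : ℕ) (i : ZMod m) : ZMod 3 := if Even i.val then 1 else -1

variable {n : ℕ} [NeZero n]

instance : NeZero (2 * n) := ⟨by have := NeZero.ne n; omega⟩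

lemma chi_add (i j : ZMod (2 * n)) : chi (2*n) (i + j) = chi (2*n) i * chi (2*n) j := by
  unfold chi
  rw [ZMod.val_add]
  have h2 : (2 : ℕ) ∣ 2 * n := ⟨n, rfl⟩
  have : (i.val + j.val) % (2 * n) % 2 = (i.val + j.val) % 2 := Nat.mod_mod_of_dvd _ h2
  have he : Even ((i.val + j.val) % (2 * n)) ↔ Even (i.val + j.val) := by
    rw [Nat.even_iff, Nat.even_iff, this]
  rw [if_congr (he.trans Nat.even_add) rfl rfl]
  by_cases hi : Even i.val <;> by_cases hj : Even j.val <;> simp [hi, hj] <;> decide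

lemma chi_zero : chi (2*n) 0 = 1 := by simp [chi, ZMod.val_zero]

lemma chi_sq (i : ZMod (2*n)) : chi (2*n) i * chi (2*n) i = 1 := by
  unfold chi; by_cases h : Even i.val <;> simp [h] <;> decide

lemma chi_one (hn : 1 < 2 * n) : chi (2*n) (1 : ZMod (2*n)) = -1 := by
  haveI : Fact (1 < 2*n) := ⟨hn⟩
  simp [chi, ZMod.val_one]

end U6nAux

section Grp
namespace U6nAux
variable (n : ℕ) [NeZero n]

def Hc (n : ℕ) := ZMod (2 * n) × ZMod 3

instance : Fintype (Hc n) := inferInstanceAs (Fintype (ZMod (2*n) × ZMod 3))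
instance : DecidableEq (Hc n) := inferInstanceAs (DecidableEq (ZMod (2*n) × ZMod 3))

instance : Group (Hc n) where
  mul x y := (x.1 + y.1, chi (2*n) y.1 * x.2 + y.2)
  one := (0, 0)
  inv x := (-x.1, -(chi (2*n) x.1 * x.2))
  mul_assoc x y z := by
    show (Prod.mk _ _ : ZMod (2*n) × ZMod 3) = _
    refine Prod.ext ?_ ?_
    · exact add_assoc _ _ _
    · show chi (2*n) z.1 * (chi (2*n) y.1 * x.2 + y.2) + z.2
        = chi (2*n) (y.1 + z.1) * x.2 + (chi (2*n) z.1 * y.2 + z.2)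
      rw [chi_add]; ring
  one_mul x := by
    show (Prod.mk _ _ : ZMod (2*n) × ZMod 3) = x
    refine Prod.ext (zero_add _) ?_
    show chi (2*n) x.1 * 0 + x.2 = x.2
    ring
  mul_one x := by
    show (Prod.mk _ _ : ZMod (2*n) × ZMod 3) = x
    refine Prod.ext (add_zero _) ?_
    show chi (2*n) 0 * x.2 + 0 = x.2
    rw [chi_zero]; ring
  inv_mul_cancel x := by
    show (Prod.mk _ _ : ZMod (2*n) × ZMod 3) = (0, 0)
    refine Prod.ext (neg_add_cancel _) ?_
    show chi (2*n) x.1 * -(chi (2*n) x.1 * x.2) + x.2 = 0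
    have := chi_sq (n := n) x.1
    calc chi (2*n) x.1 * -(chi (2*n) x.1 * x.2) + x.2
        = -(chi (2*n) x.1 * chi (2*n) x.1 * x.2) + x.2 := by ring
      _ = 0 := by rw [this]; ring

variable {n}

lemma mul_def (x y : Hc n) : x * y = (x.1 + y.1, chi (2*n) y.1 * x.2 + y.2) := rfl
lemma one_def : (1 : Hc n) = ((0 : ZMod (2*n)), (0 : ZMod 3)) := rfl
lemma inv_def (x : Hc n) : x⁻¹ = (-x.1, -(chi (2*n) x.1 * x.2)) := rfl

end U6nAux
end Grp

namespace U6nAux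
variable {n : ℕ} [NeZero n]

lemma chi_cases (i : ZMod (2*n)) : chi (2*n) i = 1 ∨ chi (2*n) i = -1 := by
  unfold chi; by_cases h : Even i.val <;> simp [h]

/-- generators -/
def aH : Hc n := ((1 : ZMod (2*n)), (0 : ZMod 3))
def bH : Hc n := ((0 : ZMod (2*n)), (1 : ZMod 3))

lemma commute_iff (x y : Hc n) :
    x * y = y * x ↔ chi (2*n) y.1 * x.2 + y.2 = chi (2*n) x.1 * y.2 + x.2 := by
  rw [mul_def, mul_def]
  exact Prod.ext_iff.trans (by simp [add_comm])

lemma hn2 : 1 < 2 * n := by have := NeZero.ne n; omega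

lemma mem_center_iff (x : Hc n) :
    x ∈ Subgroup.center (Hc n) ↔ x.2 = 0 ∧ chi (2*n) x.1 = 1 := by
  rw [Subgroup.mem_center_iff]
  constructor
  · intro h
    have ha := (commute_iff x aH).1 (h aH).symm
    have hb := (commute_iff x bH).1 (h bH).symm
    rw [show (aH : Hc n).1 = 1 from rfl, show (aH : Hc n).2 = 0 from rfl,
      chi_one hn2] at ha
    rw [show (bH : Hc n).1 = 0 from rfl, show (bH : Hc n).2 = 1 from rfl,
      chi_zero] at hb
    have key : ∀ t : ZMod 3, -t = t → t = 0 := by decide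
    have hx2 : x.2 = 0 := key _ (by linear_combination ha)
    exact ⟨hx2, by linear_combination -hb⟩
  · rintro ⟨h2, h1⟩ y
    rw [(commute_iff y x), h1, h2]
    rcases chi_cases (n := n) y.1 with h | h <;> rw [h] <;> ring

end U6nAux

namespace U6nAux
variable {n : ℕ} [NeZero n]

lemma aH_pow (k : ℕ) : (aH : Hc n) ^ k = ((k : ZMod (2*n)), (0 : ZMod 3)) := by
  induction k with
  | zero => simp [one_def]; rfl
  | succ k ih =>
    rw [pow_succ, mul_def, ih]
    refine Prod.ext ?_ ?_
    · push_cast; rfl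
    · show chi (2*n) (aH : Hc n).1 * 0 + (aH : Hc n).2 = 0
      simp [aH]

lemma bH_pow (k : ℕ) : (bH : Hc n) ^ k = ((0 : ZMod (2*n)), (k : ZMod 3)) := by
  induction k with
  | zero => simp [one_def]; rfl
  | succ k ih =>
    rw [pow_succ, mul_def, ih, show (bH : Hc n) = ((0 : ZMod (2*n)), (1 : ZMod 3)) from rfl]
    simp only [chi_zero]
    refine Prod.ext (by simp) ?_
    show (1 : ZMod 3) * (k : ZMod 3) + 1 = ((k + 1 : ℕ) : ZMod 3)
    push_cast; ring

lemma relators_hold : ∀ r ∈ U6nRels n,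
    (FreeGroup.lift (fun t : Bool => cond t (aH : Hc n) bH)) r = 1 := by
  intro r hr
  rcases hr with h | h | h
  · subst h
    rw [map_pow, FreeGroup.lift_apply_of, cond_true, aH_pow]
    rw [one_def]
    exact Prod.ext (by exact_mod_cast ZMod.natCast_self (2*n)) rfl
  · subst h
    rw [map_pow, FreeGroup.lift_apply_of, cond_false, bH_pow]
    rw [one_def]
    exact Prod.ext rfl (by exact_mod_cast ZMod.natCast_self 3)
  · rw [Set.mem_singleton_iff] at h
    subst h
    simp only [map_mul, map_inv, FreeGroup.lift_apply_of, cond_true, cond_false]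
    simp only [mul_def, inv_def, one_def,
      show (aH : Hc n).1 = 1 from rfl, show (aH : Hc n).2 = 0 from rfl,
      show (bH : Hc n).1 = 0 from rfl, show (bH : Hc n).2 = 1 from rfl,
      chi_zero, chi_one hn2]
    refine Prod.ext ?_ ?_
    · show (((-1 : ZMod (2*n)) + 0) + 1) + 0 = 0
      ring
    · show chi (2*n) 0 * ((-1) * (chi (2*n) 0 * (-((-1) * 0)) + 1) + 0) + 1 = 0
      rw [chi_zero]; decide

end U6nAux


-- matrix layer

def Mmat : Matrix (Fin 5) (Fin 5) ℝ :=
  !![0,0,1,1,1; 0,0,1,1,1; 1,1,0,1,1; 1,1,1,0,1; 1,1,1,1,0]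

set_option maxHeartbeats 2000000 in
set_option maxRecDepth 100000 in
lemma det5 (x m : ℝ) :
    Matrix.det (x • (1 : Matrix (Fin 5) (Fin 5) ℝ) - m • Mmat)
      = x * (x + m)^2 * (x^2 - 2*m*x - 6*m^2) := by
  have h : x • (1 : Matrix (Fin 5) (Fin 5) ℝ) - m • Mmat =
      Matrix.of fun i j => (if i = j then x else 0) - m * Mmat i j := by
    ext i j
    simp [Matrix.one_apply]
  rw [h]
  have h2 : (Matrix.of fun i j => (if i = j then x else 0) - m * Mmat i j) =
      !![x, 0, -m, -m, -m; 0, x, -m, -m, -m; -m, -m, x, -m, -m;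
         -m, -m, -m, x, -m; -m, -m, -m, -m, x] := by
    ext i j
    fin_cases i <;> fin_cases j <;> norm_num [Mmat, Fin.ext_iff]
  rw [h2]
  simp [Matrix.det_succ_row_zero, Fin.sum_univ_succ]
  simp [Fin.succAbove, Fin.lt_def, Matrix.vecHead, Matrix.vecTail]
  ring

lemma det_key_s10 {V : Type} [Fintype V] [DecidableEq V] (A : Matrix V V ℝ)
    (c : V → Fin 5) (M : Matrix (Fin 5) (Fin 5) ℝ)
    (hA : ∀ v w, A v w = M (c v) (c w))
    (m : ℕ) (hm : 1 ≤ m) (hc : ∀ l, Fintype.card {v // c v = l} = m)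
    (x : ℝ) (hx : x ≠ 0) :
    Matrix.det (x • (1 : Matrix V V ℝ) - A) =
      x ^ (Fintype.card V - 5) *
        Matrix.det (x • (1 : Matrix (Fin 5) (Fin 5) ℝ) - (m : ℝ) • M) := by
  classical
  set U : Matrix V (Fin 5) ℝ := Matrix.of fun v k => if c v = k then 1 else 0 with hU
  set W : Matrix (Fin 5) V ℝ := Matrix.of fun k v => M k (c v) with hW
  have hUW : U * W = A := by
    ext v w
    rw [Matrix.mul_apply]
    simp only [hU, hW, Matrix.of_apply, ite_mul, one_mul, zero_mul]
    rw [Finset.sum_ite_eq, if_pos (Finset.mem_univ _), hA]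
  have hWU : W * U = (m : ℝ) • M := by
    ext k l
    rw [Matrix.mul_apply]
    simp only [hU, hW, Matrix.of_apply, mul_ite, mul_one, mul_zero]
    have : ∀ v : V, (if c v = l then M k (c v) else 0) = (if c v = l then M k l else 0) := by
      intro v; by_cases h : c v = l <;> simp [h]
    rw [Finset.sum_congr rfl (fun v _ => this v), ← Finset.sum_filter, Finset.sum_const,
      ← Fintype.card_subtype, hc l, Matrix.smul_apply, nsmul_eq_mul, smul_eq_mul]
  have hcV : Fintype.card V = 5 * m := by
    rw [← Fintype.card_congr (Equiv.sigmaFiberEquiv c), Fintype.card_sigma]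
    simp [hc]
  have h5 : 5 ≤ Fintype.card V := by omega
  have step1 : x • (1 : Matrix V V ℝ) - A = x • (1 + ((-x⁻¹) • U) * W) := by
    rw [Matrix.smul_mul, ← hUW, smul_add, smul_smul, mul_neg, mul_inv_cancel₀ hx,
      neg_one_smul, sub_eq_add_neg]
  have step2 : (1 : Matrix (Fin 5) (Fin 5) ℝ) + W * ((-x⁻¹) • U)
      = x⁻¹ • (x • (1 : Matrix (Fin 5) (Fin 5) ℝ) - (m : ℝ) • M) := by
    rw [Matrix.mul_smul, hWU, smul_sub, smul_smul, smul_smul, smul_smul,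
      inv_mul_cancel₀ hx, one_smul, neg_mul, neg_smul, sub_eq_add_neg]
  rw [step1, Matrix.det_smul, Matrix.det_one_add_mul_comm, step2, Matrix.det_smul]
  rw [Fintype.card_fin]
  have : x ^ Fintype.card V = x ^ (Fintype.card V - 5) * x ^ 5 := by
    rw [← pow_add]; congr 1; omega
  rw [this, inv_pow]
  field_simp

open Polynomial in
lemma eval_charpoly'_s10 {V : Type} [Fintype V] [DecidableEq V] (A : Matrix V V ℝ) (x : ℝ) :
    A.charpoly.eval x = Matrix.det (x • (1 : Matrix V V ℝ) - A) := by
  rw [Matrix.charpoly, ← Polynomial.coe_evalRingHom, RingHom.map_det]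
  congr 1
  ext i j
  by_cases h : i = j <;>
    simp [Matrix.charmatrix_apply, h, Matrix.one_apply, Matrix.map_apply]

open Polynomial in
lemma charpoly_eq {V : Type} [Fintype V] [DecidableEq V] (A : Matrix V V ℝ)
    (c : V → Fin 5) (hA : ∀ v w, A v w = Mmat (c v) (c w))
    (m : ℕ) (hm : 1 ≤ m) (hc : ∀ l, Fintype.card {v // c v = l} = m) :
    A.charpoly = X ^ (5*m - 4) * ((X + C (m:ℝ))^2 *
      ((X - C ((m:ℝ) + m * Real.sqrt 7)) * (X - C ((m:ℝ) - m * Real.sqrt 7)))) := by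
  have hcV : Fintype.card V = 5 * m := by
    rw [← Fintype.card_congr (Equiv.sigmaFiberEquiv c), Fintype.card_sigma]
    simp [hc]
  apply Polynomial.eq_of_infinite_eval_eq
  apply Set.Infinite.mono (s := {x : ℝ | x ≠ 0})
  swap
  · exact (Set.finite_singleton 0).infinite_compl
  intro x hx
  simp only [Set.mem_setOf_eq] at hx ⊢
  have hs : Real.sqrt 7 * Real.sqrt 7 = 7 := Real.mul_self_sqrt (by norm_num)
  rw [eval_charpoly'_s10, det_key_s10 A c Mmat hA m hm hc x hx, det5, hcV]
  have e1 : 5 * m - 4 = (5 * m - 5) + 1 := by omega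
  simp only [eval_mul, eval_pow, eval_add, eval_sub, eval_X, eval_C, e1, pow_succ]
  linear_combination (x ^ (5*m-5) * x * (x + (m:ℝ))^2 * ((m:ℝ)^2)) * hs

open Polynomial in
lemma roots_p (m : ℕ) :
    (X ^ (5*m - 4) * ((X + C (m:ℝ))^2 *
      ((X - C ((m:ℝ) + m * Real.sqrt 7)) * (X - C ((m:ℝ) - m * Real.sqrt 7)))) : ℝ[X]).roots =
    Multiset.replicate (5 * m - 4) (0 : ℝ) + Multiset.replicate 2 (-(m : ℝ)) +
      {(m : ℝ) + (m : ℝ) * Real.sqrt 7, (m : ℝ) - (m : ℝ) * Real.sqrt 7} := by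
  have h1 : ((X : ℝ[X]) ^ (5*m-4)).roots = Multiset.replicate (5*m-4) 0 := by
    rw [roots_pow, roots_X, Multiset.nsmul_singleton]
  have h2 : (((X : ℝ[X]) + C (m:ℝ))^2).roots = Multiset.replicate 2 (-(m:ℝ)) := by
    have : (X : ℝ[X]) + C (m:ℝ) = X - C (-(m:ℝ)) := by rw [map_neg, sub_neg_eq_add]
    rw [roots_pow, this, roots_X_sub_C, Multiset.nsmul_singleton]
  have h3 : (((X : ℝ[X]) - C ((m:ℝ) + m * Real.sqrt 7)) *
      (X - C ((m:ℝ) - m * Real.sqrt 7))).roots =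
      {(m : ℝ) + (m : ℝ) * Real.sqrt 7, (m : ℝ) - (m : ℝ) * Real.sqrt 7} := by
    rw [roots_mul (by apply mul_ne_zero <;> exact X_sub_C_ne_zero _),
      roots_X_sub_C, roots_X_sub_C]
    rfl
  have mo : ((X : ℝ[X]) + C (m:ℝ))^2 *
      ((X - C ((m:ℝ) + m * Real.sqrt 7)) * (X - C ((m:ℝ) - m * Real.sqrt 7))) ≠ 0 :=
    (((monic_X_add_C _).pow 2).mul ((monic_X_sub_C _).mul (monic_X_sub_C _))).ne_zero
  rw [roots_mul (mul_ne_zero (pow_ne_zero _ X_ne_zero) mo),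
    roots_mul (mul_ne_zero ((monic_X_add_C ((m:ℝ))).pow 2).ne_zero
      ((monic_X_sub_C _).mul (monic_X_sub_C _)).ne_zero), h1, h2, h3, add_assoc]

-- counting and classification layer
namespace U6nAux
variable {n : ℕ} [NeZero n]

def evenEquiv : Fin n ≃ {i : ZMod (2*n) // Even i.val} where
  toFun k := ⟨((2 * k.1 : ℕ) : ZMod (2*n)), by
    rw [ZMod.val_cast_of_lt (by have := k.2; omega)]; exact ⟨k.1, by ring⟩⟩
  invFun x := ⟨x.1.val / 2, by have := ZMod.val_lt x.1; omega⟩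
  left_inv k := by
    ext
    simp only [ZMod.val_cast_of_lt (show 2*k.1 < 2*n by have := k.2; omega)]
    omega
  right_inv x := by
    apply Subtype.ext
    have h2 : 2 * (x.1.val / 2) = x.1.val := by
      have := x.2; rw [Nat.even_iff] at this; omega
    show ((2 * (x.1.val / 2) : ℕ) : ZMod (2*n)) = x.1
    rw [h2]
    exact ZMod.natCast_rightInverse x.1

lemma card_even : Fintype.card {i : ZMod (2*n) // Even i.val} = n := by
  rw [← Fintype.card_congr (evenEquiv (n := n)), Fintype.card_fin]

lemma card_odd : Fintype.card {i : ZMod (2*n) // ¬ Even i.val} = n := by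
  rw [Fintype.card_subtype_compl, card_even, ZMod.card]
  omega

/-- class of a vertex -/
def cls (x : Hc n) : Fin 5 :=
  if Even x.1.val then (if x.2 = 1 then 0 else 1)
  else (if x.2 = 0 then 2 else if x.2 = 1 then 3 else 4)

lemma chi_eq_one {i : ZMod (2*n)} (h : Even i.val) : chi (2*n) i = 1 := if_pos h
lemma chi_eq_negone {i : ZMod (2*n)} (h : ¬ Even i.val) : chi (2*n) i = -1 := if_neg h

lemma adj_iff (x y : Hc n) (hx : x ∉ Subgroup.center (Hc n))
    (hy : y ∉ Subgroup.center (Hc n)) :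
    (if x * y ≠ y * x then (1:ℝ) else 0) = Mmat (cls x) (cls y) := by
  rw [mem_center_iff, not_and_or] at hx hy
  have key1 : ∀ u v : ZMod 3, ((1 : ZMod 3) * u + v = 1 * v + u) := by decide
  have key2 : ∀ u v : ZMod 3, u ≠ 0 → ¬((-1 : ZMod 3) * u + v = 1 * v + u) := by decide
  have key3 : ∀ u v : ZMod 3, v ≠ 0 → ¬((1 : ZMod 3) * u + v = -1 * v + u) := by decide
  have key4 : ∀ u v : ZMod 3, ((-1 : ZMod 3) * u + v = -1 * v + u) ↔ u = v := by decide
  have hu3 : ∀ u : ZMod 3, u = 0 ∨ u = 1 ∨ u = 2 := by decide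
  simp only [ne_eq, commute_iff (n := n)]
  unfold cls
  by_cases hpx : Even x.1.val <;> by_cases hpy : Even y.1.val
  · -- both even
    simp only [chi_eq_one hpx, chi_eq_one hpy, if_pos hpx, if_pos hpy]
    rw [if_neg (not_not_intro (key1 x.2 y.2))]
    have hx2 : x.2 ≠ 0 := hx.resolve_right (not_not_intro (chi_eq_one hpx))
    have hy2 : y.2 ≠ 0 := hy.resolve_right (not_not_intro (chi_eq_one hpy))
    by_cases ex : x.2 = 1 <;> by_cases ey : y.2 = 1 <;>
      simp only [if_pos, if_neg, ex, ey, ite_true, ite_false] <;> norm_num [Mmat, show (2:ZMod 3) ≠ 0 by decide, show (2:ZMod 3) ≠ 1 by decide,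
        show (1:ZMod 3) ≠ 0 by decide, show (0:ZMod 3) ≠ 1 by decide,
        Matrix.vecHead, Matrix.vecTail]
  · -- x even, y odd
    simp only [chi_eq_one hpx, chi_eq_negone hpy, if_pos hpx, if_neg hpy]
    have hx2 : x.2 ≠ 0 := hx.resolve_right (not_not_intro (chi_eq_one hpx))
    rw [if_pos (key2 x.2 y.2 hx2)]
    by_cases ex : x.2 = 1 <;> rcases hu3 y.2 with ey | ey | ey <;>
      simp only [if_pos, if_neg, ex, ey, ite_true, ite_false] <;> norm_num [Mmat, show (2:ZMod 3) ≠ 0 by decide, show (2:ZMod 3) ≠ 1 by decide,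
        show (1:ZMod 3) ≠ 0 by decide, show (0:ZMod 3) ≠ 1 by decide,
        Matrix.vecHead, Matrix.vecTail] <;> rfl
  · -- x odd, y even
    simp only [chi_eq_negone hpx, chi_eq_one hpy, if_neg hpx, if_pos hpy]
    have hy2 : y.2 ≠ 0 := hy.resolve_right (not_not_intro (chi_eq_one hpy))
    rw [if_pos (key3 x.2 y.2 hy2)]
    by_cases ey : y.2 = 1 <;> rcases hu3 x.2 with ex | ex | ex <;>
      simp only [if_pos, if_neg, ex, ey, ite_true, ite_false] <;> norm_num [Mmat, show (2:ZMod 3) ≠ 0 by decide, show (2:ZMod 3) ≠ 1 by decide,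
        show (1:ZMod 3) ≠ 0 by decide, show (0:ZMod 3) ≠ 1 by decide,
        Matrix.vecHead, Matrix.vecTail] <;> rfl
  · -- both odd
    simp only [chi_eq_negone hpx, chi_eq_negone hpy, if_neg hpx, if_neg hpy]
    rcases hu3 x.2 with ex | ex | ex <;> rcases hu3 y.2 with ey | ey | ey <;>
      rw [ex, ey] <;>
      [skip; skip; skip; skip; skip; skip; skip; skip; skip] <;>
      first
        | (rw [if_neg (not_not_intro (by decide))] <;>
            norm_num [Mmat, show (2:ZMod 3) ≠ 0 by decide, show (2:ZMod 3) ≠ 1 by decide,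
              show (1:ZMod 3) ≠ 0 by decide, show (0:ZMod 3) ≠ 1 by decide,
              Matrix.vecHead, Matrix.vecTail] <;> rfl)
        | (rw [if_pos (by decide)] <;>
            norm_num [Mmat, show (2:ZMod 3) ≠ 0 by decide, show (2:ZMod 3) ≠ 1 by decide,
              show (1:ZMod 3) ≠ 0 by decide, show (0:ZMod 3) ≠ 1 by decide,
              Matrix.vecHead, Matrix.vecTail] <;> rfl)

end U6nAux

namespace U6nAux
variable {n : ℕ} [NeZero n]

def jv : Fin 5 → ZMod 3 := ![1, 2, 0, 1, 2]

lemma card_fiber (l : Fin 5) :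
    Nat.card {x : {h : Hc n // h ∉ Subgroup.center (Hc n)} // cls x.1 = l} = n := by
  have hu3 : ∀ u : ZMod 3, u = 0 ∨ u = 1 ∨ u = 2 := by decide
  have e2 : ∀ h : Hc n, (h ∉ Subgroup.center (Hc n) ∧ cls h = l) ↔
      ((Even h.1.val ↔ l.1 ≤ 1) ∧ h.2 = jv l) := by
    intro h
    rw [mem_center_iff]
    by_cases hp : Even h.1.val
    · rw [chi_eq_one hp]
      fin_cases l <;> rcases hu3 h.2 with e | e | e <;>
        simp [cls, hp, jv, e, Fin.ext_iff] <;> decide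
    · rw [chi_eq_negone hp]
      fin_cases l <;> rcases hu3 h.2 with e | e | e <;>
        simp only [cls, hp, jv, e, Fin.ext_iff, if_false, if_true] <;> decide
  have E1 : {x : {h : Hc n // h ∉ Subgroup.center (Hc n)} // cls x.1 = l} ≃
      {h : Hc n // (Even h.1.val ↔ l.1 ≤ 1) ∧ h.2 = jv l} :=
    (Equiv.subtypeSubtypeEquivSubtypeInter _ _).trans (Equiv.subtypeEquivRight e2)
  have E2 : {h : Hc n // (Even h.1.val ↔ l.1 ≤ 1) ∧ h.2 = jv l} ≃
      {i : ZMod (2*n) // Even i.val ↔ l.1 ≤ 1} :=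
    { toFun := fun h => ⟨h.1.1, h.2.1⟩
      invFun := fun i => ⟨(i.1, jv l), ⟨i.2, rfl⟩⟩
      left_inv := fun h => Subtype.ext (Prod.ext rfl h.2.2.symm)
      right_inv := fun i => rfl }
  rw [Nat.card_congr (E1.trans E2)]
  by_cases hl : l.1 ≤ 1
  · rw [Nat.card_congr (Equiv.subtypeEquivRight
      (q := fun i : ZMod (2*n) => Even i.val) (fun i => by simp [hl]))]
    exact Nat.card_eq_fintype_card.trans card_even
  · rw [Nat.card_congr (Equiv.subtypeEquivRight
      (q := fun i : ZMod (2*n) => ¬ Even i.val) (fun i => by simp [hl]))]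
    exact Nat.card_eq_fintype_card.trans card_odd

end U6nAux

namespace U6nAux
variable {n : ℕ} [NeZero n]

lemma card_Hc : Fintype.card (Hc n) = 6 * n := by
  show Fintype.card (ZMod (2*n) × ZMod 3) = 6 * n
  rw [Fintype.card_prod, ZMod.card, ZMod.card]
  ring

def toHc (n : ℕ) [NeZero n] : PresentedGroup (U6nRels n) →* Hc n :=
  PresentedGroup.toGroup relators_hold

lemma toHc_surjective : Function.Surjective (toHc n) := by
  intro x
  have hx : x = aH ^ x.1.val * bH ^ x.2.val := by
    simp only [mul_def]; simp only [aH_pow, bH_pow]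
    refine Prod.ext ?_ ?_
    · show x.1 = (x.1.val : ZMod (2*n)) + 0
      rw [add_zero, ZMod.natCast_rightInverse x.1]
    · show x.2 = chi (2*n) (0 : ZMod (2*n)) * 0 + (x.2.val : ZMod 3)
      rw [mul_zero, zero_add, ZMod.natCast_rightInverse x.2]
  refine ⟨PresentedGroup.of true ^ x.1.val * PresentedGroup.of false ^ x.2.val, ?_⟩
  rw [map_mul, map_pow, map_pow, toHc, PresentedGroup.toGroup.of, PresentedGroup.toGroup.of,
    cond_true, cond_false, ← hx]

end U6nAux

lemma map_mem_center_iff {G H : Type*} [Group G] [Group H] (e : G ≃* H) (g : G) :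
    e g ∈ Subgroup.center H ↔ g ∈ Subgroup.center G := by
  rw [Subgroup.mem_center_iff, Subgroup.mem_center_iff]
  constructor
  · intro h k
    have := h (e k)
    apply e.injective
    simpa only [map_mul] using this
  · intro h k
    obtain ⟨x, rfl⟩ := e.surjective k
    rw [← map_mul, ← map_mul, h]


/-- Spectrum and energy of the non-commuting graph of the group `U_{6n}` of order `6n`:
`spec = {0^(5n-4), (-n)², (n + n√7)^1, (n - n√7)^1}` and `E = 2n(1 + √7)`. -/
theorem spectrum_energy_ncGraph_U6n (n : ℕ) (hn : 1 ≤ n)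
    (G : Type) [Group G] [Fintype G]
    (hcard : Fintype.card G = 6 * n)
    (hiso : Nonempty (G ≃* PresentedGroup (U6nRels n))) :
    adjSpectrum G =
      Multiset.replicate (5 * n - 4) (0 : ℝ) +
      Multiset.replicate 2 (-(n : ℝ)) +
      {(n : ℝ) + (n : ℝ) * Real.sqrt 7, (n : ℝ) - (n : ℝ) * Real.sqrt 7} ∧
    energy G = 2 * (n : ℝ) * (1 + Real.sqrt 7) := by
  haveI : NeZero n := ⟨by omega⟩
  obtain ⟨e⟩ := hiso
  haveI : Fintype (PresentedGroup (U6nRels n)) := Fintype.ofEquiv G e.toEquiv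
  have hcardP : Fintype.card (PresentedGroup (U6nRels n)) = 6 * n := by
    rw [← Fintype.card_congr e.toEquiv, hcard]
  have hbij : Function.Bijective (U6nAux.toHc n) := by
    rw [Fintype.bijective_iff_surjective_and_card]
    exact ⟨U6nAux.toHc_surjective, by rw [hcardP, U6nAux.card_Hc]⟩
  set μ : G ≃* U6nAux.Hc n := e.trans (MulEquiv.ofBijective _ hbij) with hμ
  have hcen : ∀ g : G, g ∈ Subgroup.center G ↔ μ g ∈ Subgroup.center (U6nAux.Hc n) :=
    fun g => (map_mem_center_iff μ g).symm
  set c : {g : G // g ∉ Subgroup.center G} → Fin 5 := fun v => U6nAux.cls (μ v.1) with hcdef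
  have hA : ∀ v w, (ncGraph G).adjMatrix ℝ v w = Mmat (c v) (c w) := by
    intro v w
    rw [SimpleGraph.adjMatrix_apply]
    have hiff : (ncGraph G).Adj v w ↔ μ v.1 * μ w.1 ≠ μ w.1 * μ v.1 := by
      show (v.1 * w.1 ≠ w.1 * v.1) ↔ _
      rw [← map_mul, ← map_mul]
      exact not_congr ⟨fun h => by rw [h], fun h => μ.injective h⟩
    rw [if_congr hiff rfl rfl]
    exact U6nAux.adj_iff _ _ ((not_congr (hcen v.1)).1 v.2) ((not_congr (hcen w.1)).1 w.2)
  have hc : ∀ l, Fintype.card {v : {g : G // g ∉ Subgroup.center G} // c v = l} = n := by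
    intro l
    rw [← Nat.card_eq_fintype_card]
    refine (Nat.card_congr ?_).trans (U6nAux.card_fiber (n := n) l)
    refine { toFun := fun v => ⟨⟨μ v.1.1, (not_congr (hcen v.1.1)).1 v.1.2⟩, v.2⟩,
             invFun := fun x => ⟨⟨μ.symm x.1.1, ?_⟩, ?_⟩, left_inv := ?_, right_inv := ?_ }
    · intro hg
      exact x.1.2 (by simpa using (hcen _).1 hg)
    · show U6nAux.cls (μ (μ.symm x.1.1)) = l
      rw [MulEquiv.apply_symm_apply]
      exact x.2
    · intro v
      exact Subtype.ext (Subtype.ext (μ.symm_apply_apply v.1.1))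
    · intro x
      exact Subtype.ext (Subtype.ext (μ.apply_symm_apply x.1.1))
  have hcp := charpoly_eq ((ncGraph G).adjMatrix ℝ) c hA n hn hc
  have hspec : adjSpectrum G =
      Multiset.replicate (5 * n - 4) (0 : ℝ) +
      Multiset.replicate 2 (-(n : ℝ)) +
      {(n : ℝ) + (n : ℝ) * Real.sqrt 7, (n : ℝ) - (n : ℝ) * Real.sqrt 7} := by
    rw [adjSpectrum, hcp, roots_p]
  refine ⟨hspec, ?_⟩
  have h7 : (1 : ℝ) ≤ Real.sqrt 7 := by
    rw [show (1:ℝ) = Real.sqrt 1 from Real.sqrt_one.symm]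
    exact Real.sqrt_le_sqrt (by norm_num)
  have hs7 : (0:ℝ) ≤ Real.sqrt 7 := Real.sqrt_nonneg 7
  have hn0 : (0:ℝ) ≤ (n:ℝ) := Nat.cast_nonneg n
  rw [energy, hspec]
  simp only [Multiset.map_add, Multiset.map_replicate, Multiset.sum_add,
    Multiset.sum_replicate, Multiset.insert_eq_cons, Multiset.map_cons,
    Multiset.map_singleton, Multiset.sum_cons, Multiset.sum_singleton]
  rw [abs_zero, abs_neg, abs_of_nonneg hn0, abs_of_nonneg (by positivity),
    abs_of_nonpos (by nlinarith)]
  simp only [smul_zero, nsmul_eq_mul]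
  push_cast
  ring
end
end

section
/- Define a sequence of positive integers by n₁ = 1, n₂ = 2, n₃ = 10, n₄ = 65, n₅ = 442, n₆ = 3026, and n_{i+6} = 322·n_{i+3} − n_i − 192 for all i ≥ 1. Then a positive integer n satisfies that (n−1)(5n−1) is a perfect square if and only if n = n_i for some i ≥ 1. -/
/-- The sequence `n₁ = 1, n₂ = 2, n₃ = 10, n₄ = 65, n₅ = 442, n₆ = 3026`, with
`n_{i+6} = 322·n_{i+3} − n_i − 192` (indexed here from `0`). -/
def squareSeq : ℕ → ℕ
  | 0 => 1
  | 1 => 2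
  | 2 => 10
  | 3 => 65
  | 4 => 442
  | 5 => 3026
  | (i + 6) => 322 * squareSeq (i + 3) - squareSeq i - 192

private def fAux : ℕ → ℤ
  | 0 => 1
  | 1 => 2
  | (i+2) => 7 * fAux (i+1) - fAux i - 3

private def gAux : ℕ → ℤ
  | 0 => 0
  | 1 => 3
  | (i+2) => 7 * gAux (i+1) - gAux i

private lemma fgInv (i : ℕ) :
    (5 * fAux i - 3)^2 - 5 * (gAux i)^2 = 4 ∧
    2 * (5 * fAux (i+1) - 3) = 7 * (5 * fAux i - 3) + 15 * gAux i ∧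
    2 * gAux (i+1) = 3 * (5 * fAux i - 3) + 7 * gAux i ∧
    0 ≤ gAux i ∧ gAux i ≤ gAux (i+1) ∧ 1 ≤ fAux i ∧ fAux i ≤ fAux (i+1) := by
  induction i with
  | zero => norm_num [fAux, gAux]
  | succ n ih =>
    obtain ⟨h1, h2, h3, h4, h5, h6, h7⟩ := ih
    have hf : fAux (n+2) = 7 * fAux (n+1) - fAux n - 3 := by rw [fAux]
    have hg : gAux (n+2) = 7 * gAux (n+1) - gAux n := by rw [gAux]
    refine ⟨?_, ?_, ?_, ?_, ?_, ?_, ?_⟩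
    · nlinarith [h1, h2, h3]
    · rw [hf]; linarith
    · rw [hg]; linarith
    · linarith
    · rw [hg]; linarith
    · linarith
    · rw [hf]; linarith

private lemma fAux_rec6 (i : ℕ) : fAux (i+6) = 322 * fAux (i+3) - fAux i - 192 := by
  have e2 : fAux (i+2) = 7 * fAux (i+1) - fAux i - 3 := by rw [fAux]
  have e3 : fAux (i+3) = 7 * fAux (i+2) - fAux (i+1) - 3 := by rw [show i+3 = (i+1)+2 from rfl, fAux]
  have e4 : fAux (i+4) = 7 * fAux (i+3) - fAux (i+2) - 3 := by rw [show i+4 = (i+2)+2 from rfl, fAux]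
  have e5 : fAux (i+5) = 7 * fAux (i+4) - fAux (i+3) - 3 := by rw [show i+5 = (i+3)+2 from rfl, fAux]
  have e6 : fAux (i+6) = 7 * fAux (i+5) - fAux (i+4) - 3 := by rw [show i+6 = (i+4)+2 from rfl, fAux]
  linarith

private lemma fAux_mono {i j : ℕ} (h : i ≤ j) : fAux i ≤ fAux j := by
  induction j with
  | zero => simp_all
  | succ m ih =>
    rcases Nat.lt_or_ge i (m+1) with hm | hm
    · exact le_trans (ih (by omega)) (fgInv m).2.2.2.2.2.2
    · have : i = m + 1 := by omega
      simp [this]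

private lemma seq_eq_fAux : ∀ i, (squareSeq i : ℤ) = fAux i := by
  intro i
  induction i using Nat.strong_induction_on with
  | _ i ih =>
    match i with
    | 0 => decide
    | 1 => decide
    | 2 => decide
    | 3 => decide
    | 4 => decide
    | 5 => decide
    | (j+6) =>
      have h0 : (squareSeq j : ℤ) = fAux j := ih j (by omega)
      have h3 : (squareSeq (j+3) : ℤ) = fAux (j+3) := ih (j+3) (by omega)
      have hmono : fAux j ≤ fAux (j+3) := fAux_mono (by omega)
      have hpos : 1 ≤ fAux j := (fgInv j).2.2.2.2.2.1
      have hle : squareSeq j + 192 ≤ 322 * squareSeq (j+3) := by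
        have : (squareSeq j : ℤ) + 192 ≤ 322 * (squareSeq (j+3) : ℤ) := by
          rw [h0, h3]; linarith
        exact_mod_cast this
      have hseq : squareSeq (j+6) = 322 * squareSeq (j+3) - squareSeq j - 192 := by rfl
      rw [hseq, fAux_rec6]
      push_cast [Nat.sub_sub, Nat.cast_sub hle]
      rw [h0, h3]
      ring

private lemma forward_sq (i : ℕ) :
    ((squareSeq i : ℤ) - 1) * (5 * (squareSeq i : ℤ) - 1) = (gAux i)^2 := by
  rw [seq_eq_fAux]
  have h := (fgInv i).1
  nlinarith [h]

private lemma reverse_dir : ∀ n : ℕ, 0 < n → ∀ t : ℤ,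
    ((n : ℤ) - 1) * (5 * (n : ℤ) - 1) = t ^ 2 → ∃ i : ℕ, squareSeq i = n := by
  intro n
  induction n using Nat.strong_induction_on with
  | _ n ih =>
    intro hn t ht
    -- replace t by |t|
    have ht' : ((n : ℤ) - 1) * (5 * (n : ℤ) - 1) = |t| ^ 2 := by rw [sq_abs]; exact ht
    set s : ℤ := |t| with hs
    have hs0 : 0 ≤ s := abs_nonneg t
    clear ht
    set x : ℤ := 5 * (n : ℤ) - 3 with hxdef
    have hx : x ^ 2 = 5 * s ^ 2 + 4 := by
      rw [hxdef]; linear_combination 5 * ht'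
    rcases Nat.lt_or_ge n 3 with hsmall | hbig
    · interval_cases n
      · exact ⟨0, rfl⟩
      · exact ⟨1, rfl⟩
    -- n ≥ 3
    have hnI : (3 : ℤ) ≤ (n : ℤ) := by exact_mod_cast hbig
    have hxpos : (12 : ℤ) ≤ x := by rw [hxdef]; linarith
    have hs6 : 6 ≤ s := by nlinarith [ht', hs0]
    -- parity: x - s is even
    have hpar : (2 : ℤ) ∣ (x - s) := by
      have h2 : (2 : ℤ) ∣ (x - s) * (x + s) := ⟨2 * s ^ 2 + 2, by linarith [hx]⟩
      rcases (Int.prime_two.dvd_mul.mp h2) with h | h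
      · exact h
      · obtain ⟨k, hk⟩ := h
        exact ⟨k - s, by omega⟩
    obtain ⟨d, hd⟩ := hpar
    set x' : ℤ := 7 * d - 4 * s with hx'def
    set s' : ℤ := 2 * s - 3 * d with hs'def
    have h2x' : 2 * x' = 7 * x - 15 * s := by rw [hx'def]; linarith
    have h2s' : 2 * s' = 7 * s - 3 * x := by rw [hs'def]; linarith
    have hq : x' ^ 2 - 5 * s' ^ 2 = 4 := by nlinarith [hx, h2x', h2s']
    have hx'pos : 0 < x' := by nlinarith [hx, hs0, hxpos, h2x']
    have hs'0 : 0 ≤ s' := by nlinarith [hx, hs6, hxpos, h2s']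
    have hx'lt : x' < x := by nlinarith [hx, hs6, hxpos, h2x']
    -- x' ≡ 2 mod 5
    have hmod : ∃ m : ℤ, x' = 5 * m - 3 := by
      have h5 : (5 : ℤ) ∣ 2 * (x' + 3) := ⟨7 * (n : ℤ) - 3 - 3 * s, by rw [hxdef] at h2x'; linarith⟩
      obtain ⟨k, hk⟩ := h5
      refine ⟨(x' + 3) / 5, ?_⟩
      omega
    obtain ⟨m, hm⟩ := hmod
    have hm1 : 1 ≤ m := by omega
    have hmn : m < (n : ℤ) := by rw [hxdef] at hx'lt; omega
    -- n' : ℕ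
    set n' : ℕ := m.toNat with hn'def
    have hcast : (n' : ℤ) = m := Int.toNat_of_nonneg (by linarith)
    have hn'lt : n' < n := by omega
    have hn'pos : 0 < n' := by omega
    have hsq' : ((n' : ℤ) - 1) * (5 * (n' : ℤ) - 1) = s' ^ 2 := by
      rw [hcast]
      have h5 : 5 * ((m - 1) * (5 * m - 1)) = 5 * s' ^ 2 := by
        linear_combination hq - (x' + 5 * m - 3) * hm
      linarith
    obtain ⟨j, hj⟩ := ih n' hn'lt hn'pos s' hsq'
    -- now show squareSeq (j+1) = n
    refine ⟨j + 1, ?_⟩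
    have hfj : fAux j = (n' : ℤ) := by rw [← seq_eq_fAux, hj]
    obtain ⟨hI1, hI2, hI3, hI4, hI5, hI6, hI7⟩ := fgInv j
    have hxj : 5 * fAux j - 3 = x' := by rw [hfj, hcast, hm]
    -- gAux j = s'
    have hgj : gAux j = s' := by
      have hsq_eq : (gAux j) ^ 2 = s' ^ 2 := by
        rw [hxj] at hI1
        linarith [hq, hI1]
      have hz : (gAux j - s') * (gAux j + s') = 0 := by linear_combination hsq_eq
      rcases mul_eq_zero.mp hz with h | h <;> linarith
    -- recover x
    have hxrec : 2 * x = 7 * x' + 15 * s' := by linarith [h2x', h2s']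
    have : 2 * (5 * fAux (j+1) - 3) = 2 * x := by
      rw [hxj, hgj] at hI2
      linarith [hI2, hxrec]
    have hfj1 : fAux (j + 1) = (n : ℤ) := by rw [hxdef] at this; linarith
    have : (squareSeq (j+1) : ℤ) = (n : ℤ) := by rw [seq_eq_fAux, hfj1]
    exact_mod_cast this


/-- A positive integer `n` is such that `(n-1)(5n-1)` is a perfect square if and only if
`n` is a term of the sequence `1, 2, 10, 65, 442, 3026, …` defined by the recurrence
`n_{i+6} = 322·n_{i+3} − n_i − 192`. -/
theorem perfect_square_iff_mem_squareSeq (n : ℕ) (hn : 0 < n) :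
    (∃ t : ℤ, ((n : ℤ) - 1) * (5 * (n : ℤ) - 1) = t ^ 2) ↔ ∃ i : ℕ, squareSeq i = n := by
  constructor
  · rintro ⟨t, ht⟩
    exact reverse_dir n hn t ht
  · rintro ⟨i, hi⟩
    exact ⟨gAux i, by rw [← hi]; exact forward_sq i⟩
end
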